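/- Let A ∈ ℝ^{N×N} be block partitioned and 'border block diagonal': A_{ij} = 0 unless i = j, i = 1, or j = 1. Suppose there exist symmetric positive definite Q_1,…,Q_n and positive semidefinite Y_j, Z_j (j ≥ 2) such that Q_1 A_{11} + A_{11}ᵀ Q_1 + Σ_{j≥2} Y_j ≺ 0, Q_j A_{jj} + A_{jj}ᵀ Q_j + Z_j ⪯ 0 for j ≥ 2, and [[Y_j, -Q_1 A_{1j} - A_{j1}ᵀ Q_j], [-A_{1j}ᵀ Q_1 - Q_j A_{j1}, Z_j]] ≻ 0 for j ≥ 2. Then Q = diag(Q_1,…,Q_n) is positive definite and Q·A + Aᵀ·Q is negative definite. -/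

import Mathlib

/-!
Write `u = x₀` and `vⱼ = xⱼ` for the blocks of a vector `x` and `M = -(QA + AᵀQ)`. Because `M` is
border block diagonal, `xᵀMx` only involves the blocks `M₀₀`, `M₀ⱼ`, `Mⱼ₀`, `Mⱼⱼ`. Distributing
`uᵀ(∑ⱼ Yⱼ)u` over `j` and adding and subtracting `vⱼᵀZⱼvⱼ` regroups it as
`uᵀ(M₀₀ - ∑ⱼ Yⱼ)u + ∑ⱼ ((u, vⱼ)ᵀ [Yⱼ, M₀ⱼ; Mⱼ₀, Zⱼ] (u, vⱼ) + vⱼᵀ(Mⱼⱼ - Zⱼ)vⱼ)`, a sum of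
nonnegative terms of which the first is positive if `u ≠ 0` and the `j`-th coupling term is
positive if `vⱼ ≠ 0`.
-/

open Matrix Finset

/-- The `(i, j)` block of an `α`-partitioned matrix. -/
def blk {n : ℕ} {k : Fin n → ℕ} {R : Type*}
    (A : Matrix ((i : Fin n) × Fin (k i)) ((i : Fin n) × Fin (k i)) R)
    (i j : Fin n) : Matrix (Fin (k i)) (Fin (k j)) R :=
  Matrix.of fun a b => A ⟨i, a⟩ ⟨j, b⟩

section Blocks

variable {m : ℕ} {k : Fin m → ℕ} {R : Type*}

def vblk (x : ((i : Fin m) × Fin (k i)) → R) (i : Fin m) : Fin (k i) → R :=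
  fun a => x ⟨i, a⟩

lemma vblk_star [Star R] (x : ((i : Fin m) × Fin (k i)) → R) (i : Fin m) :
    vblk (star x) i = star (vblk x i) := rfl

lemma exists_vblk_ne_zero [Zero R] {x : ((i : Fin m) × Fin (k i)) → R} (hx : x ≠ 0) :
    ∃ i, vblk x i ≠ 0 := by
  contrapose! hx
  ext ⟨i, a⟩
  exact congrFun (hx i) a

variable (M N : Matrix ((i : Fin m) × Fin (k i)) ((i : Fin m) × Fin (k i)) R)
  (Q : ∀ i, Matrix (Fin (k i)) (Fin (k i)) R) (i j : Fin m)

lemma dotProduct_mulVec_eq_sum_blk [NonUnitalNonAssocSemiring R]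
    (x y : ((i : Fin m) × Fin (k i)) → R) :
    x ⬝ᵥ M *ᵥ y = ∑ i, ∑ j, vblk x i ⬝ᵥ blk M i j *ᵥ vblk y j := by
  simp only [dotProduct, mulVec, blk, of_apply, vblk, Fintype.sum_sigma, Finset.mul_sum]
  exact sum_congr rfl fun i _ => sum_comm

lemma blk_mul [NonUnitalNonAssocSemiring R] : blk (M * N) i j = ∑ l, blk M i l * blk N l j := by
  ext a b
  simp only [blk, of_apply, mul_apply, Fintype.sum_sigma, Matrix.sum_apply]

lemma blk_transpose : blk Mᵀ i j = (blk M j i)ᵀ := rfl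

lemma blk_add [Add R] : blk (M + N) i j = blk M i j + blk N i j := rfl

lemma blk_neg [Neg R] : blk (-M) i j = -blk M i j := rfl

lemma blk_blockDiagonal'_self [Zero R] : blk (blockDiagonal' Q) i i = Q i := by
  ext a b
  exact blockDiagonal'_apply_eq Q i a b

variable {i j} in
lemma blk_blockDiagonal'_of_ne [Zero R] (h : i ≠ j) : blk (blockDiagonal' Q) i j = 0 := by
  ext a b
  exact blockDiagonal'_apply_ne Q a b h

lemma blk_blockDiagonal'_mul [NonUnitalNonAssocSemiring R] :
    blk (blockDiagonal' Q * M) i j = Q i * blk M i j := by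
  rw [blk_mul, Fintype.sum_eq_single i fun l hl => by
    rw [blk_blockDiagonal'_of_ne Q hl.symm, Matrix.zero_mul], blk_blockDiagonal'_self]

lemma blk_mul_blockDiagonal' [NonUnitalNonAssocSemiring R] :
    blk (M * blockDiagonal' Q) i j = blk M i j * Q j := by
  rw [blk_mul, Fintype.sum_eq_single j fun l hl => by
    rw [blk_blockDiagonal'_of_ne Q hl, Matrix.mul_zero], blk_blockDiagonal'_self]

variable {Q} in
lemma posDef_blockDiagonal' [Ring R] [PartialOrder R] [StarRing R] [IsOrderedCancelAddMonoid R]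
    (hQ : ∀ i, (Q i).PosDef) : (blockDiagonal' Q).PosDef := by
  refine posDef_iff_dotProduct_mulVec.mpr
    ⟨isHermitian_blockDiagonal'_iff.mpr fun i => (hQ i).isHermitian, fun x hx => ?_⟩
  have hdiag : ∀ i, ∑ j, vblk (star x) i ⬝ᵥ blk (blockDiagonal' Q) i j *ᵥ vblk x j
      = star (vblk x i) ⬝ᵥ Q i *ᵥ vblk x i := fun i => by
    rw [Fintype.sum_eq_single i fun j hj => by simp [blk_blockDiagonal'_of_ne Q hj.symm],
      blk_blockDiagonal'_self, vblk_star]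
  obtain ⟨i, hi⟩ := exists_vblk_ne_zero hx
  rw [dotProduct_mulVec_eq_sum_blk, sum_congr rfl fun i _ => hdiag i]
  exact sum_pos' (fun j _ => (hQ j).posSemidef.dotProduct_mulVec_nonneg _)
    ⟨i, mem_univ i, (hQ i).dotProduct_mulVec_pos hi⟩

end Blocks

lemma Fin.sum_sum_eq_of_border {M : Type*} [AddCommMonoid M] {n : ℕ}
    (f : Fin (n + 1) → Fin (n + 1) → M) (hf : ∀ i j, i ≠ j → i ≠ 0 → j ≠ 0 → f i j = 0) :
    ∑ i, ∑ j, f i j = f 0 0 + ∑ j ∈ univ.erase 0, (f 0 j + f j 0 + f j j) := by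
  have hrow : ∀ i ∈ univ.erase (0 : Fin (n + 1)), ∑ j, f i j = f i 0 + f i i := fun i hi => by
    have hi0 := ne_of_mem_erase hi
    rw [← add_sum_erase _ _ (mem_univ 0), sum_eq_single_of_mem i (mem_erase.mpr ⟨hi0, mem_univ i⟩)
      fun j hj hji => hf i j hji.symm hi0 (ne_of_mem_erase hj)]
  rw [← add_sum_erase _ _ (mem_univ 0), ← add_sum_erase _ (f 0) (mem_univ 0), sum_congr rfl hrow]
  simp only [sum_add_distrib]
  abel

section Border

variable {n : ℕ} {k : Fin (n + 1) → ℕ} {R : Type*} [Ring R]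
  {M : Matrix ((i : Fin (n + 1)) × Fin (k i)) ((i : Fin (n + 1)) × Fin (k i)) R}
  (hborder : ∀ i j, i ≠ j → i ≠ 0 → j ≠ 0 → blk M i j = 0)
  (Y : Fin (n + 1) → Matrix (Fin (k 0)) (Fin (k 0)) R) (Z : ∀ j, Matrix (Fin (k j)) (Fin (k j)) R)
include hborder

lemma dotProduct_mulVec_eq_border_split (x y : ((i : Fin (n + 1)) × Fin (k i)) → R) :
    x ⬝ᵥ M *ᵥ y = vblk x 0 ⬝ᵥ (blk M 0 0 - ∑ j ∈ univ.erase 0, Y j) *ᵥ vblk y 0 +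
      ∑ j ∈ univ.erase 0,
        (Sum.elim (vblk x 0) (vblk x j) ⬝ᵥ
            fromBlocks (Y j) (blk M 0 j) (blk M j 0) (Z j) *ᵥ Sum.elim (vblk y 0) (vblk y j) +
          vblk x j ⬝ᵥ (blk M j j - Z j) *ᵥ vblk y j) := by
  rw [dotProduct_mulVec_eq_sum_blk, Fin.sum_sum_eq_of_border _ fun i j hij hi hj => by
    rw [hborder i j hij hi hj, zero_mulVec, dotProduct_zero]]
  simp only [fromBlocks_mulVec, sumElim_dotProduct_sumElim, sub_mulVec, dotProduct_sub,
    dotProduct_add, Matrix.sum_mulVec, Sum.elim_comp_inl, Sum.elim_comp_inr, dotProduct_sum,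
    sum_add_distrib, sum_sub_distrib]
  abel

theorem posDef_of_border [PartialOrder R] [StarRing R] [IsOrderedCancelAddMonoid R]
    (hM : M.IsHermitian) (h₀ : (blk M 0 0 - ∑ j ∈ univ.erase 0, Y j).PosDef)
    (hcoupling : ∀ j, j ≠ 0 → (fromBlocks (Y j) (blk M 0 j) (blk M j 0) (Z j)).PosDef)
    (hdiag : ∀ j, j ≠ 0 → (blk M j j - Z j).PosSemidef) :
    M.PosDef := by
  refine posDef_iff_dotProduct_mulVec.mpr ⟨hM, fun x hx => ?_⟩
  rw [dotProduct_mulVec_eq_border_split hborder Y Z]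
  simp only [vblk_star, ← Function.star_sumElim]
  set w := fun j => Sum.elim (vblk x 0) (vblk x j)
  have hterm_nonneg : ∀ j ∈ univ.erase 0,
      0 ≤ star (w j) ⬝ᵥ fromBlocks (Y j) (blk M 0 j) (blk M j 0) (Z j) *ᵥ w j +
        star (vblk x j) ⬝ᵥ (blk M j j - Z j) *ᵥ vblk x j := fun j hj =>
    add_nonneg ((hcoupling j (ne_of_mem_erase hj)).posSemidef.dotProduct_mulVec_nonneg _)
      ((hdiag j (ne_of_mem_erase hj)).dotProduct_mulVec_nonneg _)
  by_cases h0 : vblk x 0 = 0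
  · obtain ⟨j, hj⟩ := exists_vblk_ne_zero hx
    have hj0 : j ≠ 0 := by rintro rfl; exact hj h0
    have hw : w j ≠ 0 := fun hw => hj (funext fun b => congrFun hw (Sum.inr b))
    refine add_pos_of_nonneg_of_pos (h₀.posSemidef.dotProduct_mulVec_nonneg _)
      (sum_pos' hterm_nonneg ⟨j, mem_erase.mpr ⟨hj0, mem_univ j⟩, ?_⟩)
    exact add_pos_of_pos_of_nonneg ((hcoupling j hj0).dotProduct_mulVec_pos hw)
      ((hdiag j hj0).dotProduct_mulVec_nonneg _)
  · exact add_pos_of_pos_of_nonneg (h₀.dotProduct_mulVec_pos h0) (sum_nonneg hterm_nonneg)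

end Border

theorem border_block_diagonal_stability_general {n : ℕ} (k : Fin (n + 1) → ℕ)
    (A : Matrix ((i : Fin (n + 1)) × Fin (k i)) ((i : Fin (n + 1)) × Fin (k i)) ℝ)
    (hborder : ∀ i j : Fin (n + 1), i ≠ j → i ≠ 0 → j ≠ 0 → blk A i j = 0)
    (Q : ∀ i, Matrix (Fin (k i)) (Fin (k i)) ℝ)
    (Y : ∀ j : Fin (n + 1), Matrix (Fin (k 0)) (Fin (k 0)) ℝ)
    (Z : ∀ j : Fin (n + 1), Matrix (Fin (k j)) (Fin (k j)) ℝ)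
    (hQ : ∀ i, (Q i).PosDef)
    (h1 : (-(Q 0 * blk A 0 0 + (blk A 0 0)ᵀ * Q 0
        + ∑ j ∈ Finset.univ.erase 0, Y j)).PosDef)
    (h2 : ∀ j, j ≠ 0 → (-(Q j * blk A j j + (blk A j j)ᵀ * Q j + Z j)).PosSemidef)
    (h3 : ∀ j, j ≠ 0 →
      (Matrix.fromBlocks (Y j) (-(Q 0 * blk A 0 j + (blk A j 0)ᵀ * Q j))
        (-((blk A 0 j)ᵀ * Q 0 + Q j * blk A j 0)) (Z j)).PosDef) :
    (Matrix.blockDiagonal' Q).PosDef ∧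
      (-(Matrix.blockDiagonal' Q * A + Aᵀ * Matrix.blockDiagonal' Q)).PosDef := by
  set P := blockDiagonal' Q
  have hP : P.PosDef := posDef_blockDiagonal' hQ
  have hPA : (P * A)ᴴ = Aᵀ * P := by
    rw [conjTranspose_mul, hP.isHermitian.eq, conjTranspose_eq_transpose_of_trivial]
  have hblk : ∀ i j, blk (-(P * A + Aᵀ * P)) i j = -(Q i * blk A i j + (blk A j i)ᵀ * Q j) :=
    fun i j => by
      rw [blk_neg, blk_add, blk_blockDiagonal'_mul, blk_mul_blockDiagonal', blk_transpose]
  have hborder' : ∀ i j, i ≠ j → i ≠ 0 → j ≠ 0 → blk (-(P * A + Aᵀ * P)) i j = 0 :=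
    fun i j hij hi hj => by
      rw [hblk, hborder i j hij hi hj, hborder j i hij.symm hj hi]
      simp
  refine ⟨hP, posDef_of_border hborder' Y Z
    (hPA ▸ (isHermitian_add_transpose_self (P * A)).neg) ?_ (fun j hj => ?_) (fun j hj => ?_)⟩
  · rwa [hblk, sub_eq_add_neg, ← neg_add]
  · rw [hblk, hblk, add_comm (Q j * _)]
    exact h3 j hj
  · rw [hblk, sub_eq_add_neg, ← neg_add]
    exact h2 j hj

theorem border_block_diagonal_stability {n : ℕ} (k : Fin (n + 1) → ℕ)
    (A : Matrix ((i : Fin (n + 1)) × Fin (k i)) ((i : Fin (n + 1)) × Fin (k i)) ℝ)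
    (hborder : ∀ i j : Fin (n + 1), i ≠ j → i ≠ 0 → j ≠ 0 → blk A i j = 0)
    (Q : ∀ i, Matrix (Fin (k i)) (Fin (k i)) ℝ)
    (Y : ∀ j : Fin (n + 1), Matrix (Fin (k 0)) (Fin (k 0)) ℝ)
    (Z : ∀ j : Fin (n + 1), Matrix (Fin (k j)) (Fin (k j)) ℝ)
    (hQ : ∀ i, (Q i).PosDef)
    (hQsymm : ∀ i, (Q i).IsSymm)
    (hY : ∀ j, j ≠ 0 → (Y j).PosSemidef)
    (hZ : ∀ j, j ≠ 0 → (Z j).PosSemidef)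
    (h1 : (-(Q 0 * blk A 0 0 + (blk A 0 0)ᵀ * Q 0
        + ∑ j ∈ Finset.univ.erase 0, Y j)).PosDef)
    (h2 : ∀ j, j ≠ 0 → (-(Q j * blk A j j + (blk A j j)ᵀ * Q j + Z j)).PosSemidef)
    (h3 : ∀ j, j ≠ 0 →
      (Matrix.fromBlocks (Y j) (-(Q 0 * blk A 0 j + (blk A j 0)ᵀ * Q j))
        (-((blk A 0 j)ᵀ * Q 0 + Q j * blk A j 0)) (Z j)).PosDef) :
    (Matrix.blockDiagonal' Q).PosDef ∧
      (-(Matrix.blockDiagonal' Q * A + Aᵀ * Matrix.blockDiagonal' Q)).PosDef :=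
  border_block_diagonal_stability_general k A hborder Q Y Z hQ h1 h2 h3
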